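/- arXiv:2312.10029 — 6 statements merged into one kernel-verified Lean document; each statement's English description precedes it below -/
import Mathlib

section
/- Let Q be a finite set of questions and let h : Q → {0,1} be an arbitrary binary feature. Define the probe p⁺(q) = h(q) and p⁻(q) = 1 − h(q) for every q ∈ Q. Then the total CCS loss of this probe is zero: Σ_{q ∈ Q} [ (p⁺(q) − (1 − p⁻(q)))² + (min(p⁺(q), p⁻(q)))² ] = 0. -/
theorem min_one_sub_eq_zero_of_eq_zero_or_eq_one {α : Type*} [Ring α] [LinearOrder α]
    [IsOrderedRing α] {x : α} (hx : x = 0 ∨ x = 1) : min x (1 - x) = 0 := by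
  rcases hx with rfl | rfl <;> simp

/-- For a binary feature `h`, the probe `p⁺ = h`, `p⁻ = 1 - h`
has total CCS loss zero. -/
theorem ccs_loss_zero_of_binary_feature {Q : Type*} [Fintype Q]
    (h : Q → ℝ) (hbin : ∀ q, h q = 0 ∨ h q = 1) :
    ∑ q : Q, ((h q - (1 - (1 - h q))) ^ 2 + (min (h q) (1 - h q)) ^ 2) = 0 := by
  refine Finset.sum_eq_zero fun q _ => ?_
  rw [min_one_sub_eq_zero_of_eq_zero_or_eq_one (hbin q)]
  ring
end

section
/- Let Q be a set of questions, p⁺, p⁻ : Q → ℝ a probe, and h : Q → {0,1} a binary feature. Define the transformed probe p'⁺(q) = p⁺(q) ⊕ h(q) and p'⁻(q) = p⁻(q) ⊕ h(q), where a ⊕ b = (1 − a)·b + (1 − b)·a. Then for every q ∈ Q the consistency loss is preserved: (p'⁺(q) − (1 − p'⁻(q)))² = (p⁺(q) − (1 − p⁻(q)))². -/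
/-- The continuous exclusive-or of two reals. -/
def cxor (a b : ℝ) : ℝ := (1 - a) * b + (1 - b) * a

theorem cxor_sub_one_sub_cxor (a c b : ℝ) :
    cxor a b - (1 - cxor c b) = (1 - 2 * b) * (a - (1 - c)) := by
  unfold cxor
  ring

theorem one_sub_two_mul_sq_of_eq_zero_or_eq_one {b : ℝ} (hb : b = 0 ∨ b = 1) :
    (1 - 2 * b) ^ 2 = 1 := by
  rcases hb with rfl | rfl <;> norm_num

/-- Transforming a probe by `⊕ h(q)` with a binary feature `h`
preserves the consistency loss at every question. -/
theorem consistency_loss_preserved_under_cxor {Q : Type*}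
    (pp pm : Q → ℝ) (h : Q → ℝ) (hbin : ∀ q, h q = 0 ∨ h q = 1) :
    ∀ q : Q,
      (cxor (pp q) (h q) - (1 - cxor (pm q) (h q))) ^ 2
        = (pp q - (1 - pm q)) ^ 2 := by
  intro q
  rw [cxor_sub_one_sub_cxor, mul_pow, one_sub_two_mul_sq_of_eq_zero_or_eq_one (hbin q), one_mul]
end

section
/- Let Q be a set of questions, p⁺, p⁻ : Q → ℝ a probe, and h : Q → {0,1} a binary feature. Define the transformed probe p'⁺(q) = p⁺(q) ⊕ h(q) and p'⁻(q) = p⁻(q) ⊕ h(q), where a ⊕ b = (1 − a)·b + (1 − b)·a. Then for every q ∈ Q the symmetric confidence loss is preserved: (min{p'⁺(q), p'⁻(q), 1 − p'⁺(q), 1 − p'⁻(q)})² = (min{p⁺(q), p⁻(q), 1 − p⁺(q), 1 − p⁻(q)})². -/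
@[simp] lemma cxor_zero_right (a : ℝ) : cxor a 0 = a := by
  simp [cxor]

@[simp] lemma cxor_one_right (a : ℝ) : cxor a 1 = 1 - a := by
  simp [cxor]

def symConfLoss (a b : ℝ) : ℝ := (min (min a b) (min (1 - a) (1 - b))) ^ 2

lemma symConfLoss_one_sub (a b : ℝ) : symConfLoss (1 - a) (1 - b) = symConfLoss a b := by
  simp only [symConfLoss, sub_sub_cancel, min_comm (min (1 - a) (1 - b))]

/-- Transforming a probe by `⊕ h(q)` with a binary feature `h`
preserves the symmetric confidence loss at every question. -/
theorem symmetric_confidence_loss_preserved_under_cxor {Q : Type*}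
    (pp pm : Q → ℝ) (h : Q → ℝ) (hbin : ∀ q, h q = 0 ∨ h q = 1) :
    ∀ q : Q,
      (min (min (cxor (pp q) (h q)) (cxor (pm q) (h q)))
           (min (1 - cxor (pp q) (h q)) (1 - cxor (pm q) (h q)))) ^ 2
        = (min (min (pp q) (pm q)) (min (1 - pp q) (1 - pm q))) ^ 2 := by
  intro q
  change symConfLoss (cxor (pp q) (h q)) (cxor (pm q) (h q)) = symConfLoss (pp q) (pm q)
  rcases hbin q with h0 | h1
  · rw [h0, cxor_zero_right, cxor_zero_right]
  · rw [h1, cxor_one_right, cxor_one_right, symConfLoss_one_sub]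
end

section
/- Let Q be a finite set of questions, p⁺, p⁻ : Q → ℝ a probe, and h : Q → {0,1} a binary feature. Define the transformed probe p'⁺(q) = p⁺(q) ⊕ h(q) and p'⁻(q) = p⁻(q) ⊕ h(q), where a ⊕ b = (1 − a)·b + (1 − b)·a. Then the total symmetric CCS losses are equal: Σ_{q ∈ Q} [ (p'⁺(q) − (1 − p'⁻(q)))² + (min{p'⁺(q), p'⁻(q), 1 − p'⁺(q), 1 − p'⁻(q)})² ] = Σ_{q ∈ Q} [ (p⁺(q) − (1 − p⁻(q)))² + (min{p⁺(q), p⁻(q), 1 − p⁺(q), 1 − p⁻(q)})² ]. -/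
/-- The symmetric CCS loss of a single question with outputs `p⁺ = a`, `p⁻ = b`. -/
def symmCCSLoss (a b : ℝ) : ℝ :=
  (a - (1 - b)) ^ 2 + (min (min a b) (min (1 - a) (1 - b))) ^ 2

lemma symmCCSLoss_one_sub (a b : ℝ) : symmCCSLoss (1 - a) (1 - b) = symmCCSLoss a b := by
  have hconsistency : (1 - a - (1 - (1 - b))) ^ 2 = (a - (1 - b)) ^ 2 := by ring
  rw [symmCCSLoss, symmCCSLoss, hconsistency, sub_sub_cancel, sub_sub_cancel,
    min_comm (min (1 - a) (1 - b))]

lemma symmCCSLoss_cxor_of_binary (a b : ℝ) {c : ℝ} (hc : c = 0 ∨ c = 1) :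
    symmCCSLoss (cxor a c) (cxor b c) = symmCCSLoss a b := by
  rcases hc with rfl | rfl
  · simp only [cxor_zero_right]
  · simp only [cxor_one_right, symmCCSLoss_one_sub]

/-- Transforming a probe by `⊕ h(q)` with a binary feature `h`
preserves the total symmetric CCS loss. -/
theorem symmetric_ccs_loss_preserved_under_cxor {Q : Type*} [Fintype Q]
    (pp pm : Q → ℝ) (h : Q → ℝ) (hbin : ∀ q, h q = 0 ∨ h q = 1) :
    ∑ q : Q, ((cxor (pp q) (h q) - (1 - cxor (pm q) (h q))) ^ 2 +
        (min (min (cxor (pp q) (h q)) (cxor (pm q) (h q)))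
             (min (1 - cxor (pp q) (h q)) (1 - cxor (pm q) (h q)))) ^ 2)
      = ∑ q : Q, ((pp q - (1 - pm q)) ^ 2 +
        (min (min (pp q) (pm q)) (min (1 - pp q) (1 - pm q))) ^ 2) :=
  Fintype.sum_congr _ _ fun q => symmCCSLoss_cxor_of_binary (pp q) (pm q) (hbin q)
end

section
/- Consider a constant probe with p⁺(q) = p⁻(q) = k for all questions, with k ∈ [0,1]. Its per-question symmetric CCS loss is (2k − 1)² + (min(k, 1 − k))², and the set of minimizers of this function over [0,1] is exactly {2/5, 3/5}, which is symmetric around 1/2. -/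
/-!
Writing `m = min k (1 - k)`, one has `|2k - 1| = 1 - 2m`, so the loss of the constant probe is
`(1 - 2m)² + m² = 5 (m - 2/5)² + 1/5`. Its minimum `1/5` is attained exactly when `m = 2/5`,
that is, at `k = 2/5` and `k = 3/5`.
-/

noncomputable section

def symCCSLoss (p q : ℝ) : ℝ :=
  (p - (1 - q)) ^ 2 + (min (min p q) (min (1 - p) (1 - q))) ^ 2

def constantProbeLoss (k : ℝ) : ℝ :=
  (2 * k - 1) ^ 2 + (min k (1 - k)) ^ 2

theorem symCCSLoss_self (k : ℝ) : symCCSLoss k k = constantProbeLoss k := by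
  rw [symCCSLoss, constantProbeLoss, min_self, min_self]
  ring

theorem constantProbeLoss_eq (k : ℝ) :
    constantProbeLoss k = 5 * (min k (1 - k) - 2 / 5) ^ 2 + 1 / 5 := by
  rw [constantProbeLoss]
  rcases le_total k (1 - k) with h | h
  · rw [min_eq_left h]; ring
  · rw [min_eq_right h]; ring

theorem one_fifth_le_constantProbeLoss (k : ℝ) : 1 / 5 ≤ constantProbeLoss k := by
  rw [constantProbeLoss_eq]
  exact le_add_of_nonneg_left (by positivity)

theorem constantProbeLoss_eq_one_fifth_iff {k : ℝ} :
    constantProbeLoss k = 1 / 5 ↔ k = 2 / 5 ∨ k = 3 / 5 := by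
  have hmin : constantProbeLoss k = 1 / 5 ↔ min k (1 - k) = 2 / 5 := by
    rw [constantProbeLoss_eq, add_eq_right, mul_eq_zero, pow_eq_zero_iff two_ne_zero, sub_eq_zero]
    norm_num
  rw [hmin, min_eq_iff]
  constructor
  · rintro (⟨h, -⟩ | ⟨h, -⟩)
    · exact Or.inl h
    · exact Or.inr (by linarith)
  · rintro (rfl | rfl) <;> norm_num

end

/-- The per-question symmetric CCS loss of the constant probe
`p⁺ = p⁻ = k` is `(2k - 1)² + (min(k, 1 - k))²`, and the set of its minimizers
over `[0,1]` is exactly `{2/5, 3/5}`. -/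
theorem constant_probe_symmetric_ccs_loss_minimizers :
    (∀ k : ℝ, (k - (1 - k)) ^ 2 + (min (min k k) (min (1 - k) (1 - k))) ^ 2
        = (2 * k - 1) ^ 2 + (min k (1 - k)) ^ 2) ∧
    ({k : ℝ | k ∈ Set.Icc (0:ℝ) 1 ∧
        ∀ k' ∈ Set.Icc (0:ℝ) 1,
          (2 * k - 1) ^ 2 + (min k (1 - k)) ^ 2
            ≤ (2 * k' - 1) ^ 2 + (min k' (1 - k')) ^ 2}
      = {2/5, 3/5}) := by
  refine ⟨symCCSLoss_self, ?_⟩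
  change {k : ℝ | k ∈ Set.Icc (0:ℝ) 1 ∧ ∀ k' ∈ Set.Icc (0:ℝ) 1,
    constantProbeLoss k ≤ constantProbeLoss k'} = {2/5, 3/5}
  ext k
  simp only [Set.mem_ofPred_eq, Set.mem_insert_iff, Set.mem_singleton_iff]
  constructor
  · rintro ⟨-, hk⟩
    have hle := hk (2 / 5) ⟨by norm_num, by norm_num⟩
    rw [constantProbeLoss_eq_one_fifth_iff.mpr (Or.inl rfl)] at hle
    exact constantProbeLoss_eq_one_fifth_iff.mp
      (le_antisymm hle (one_fifth_le_constantProbeLoss k))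
  · intro hk
    refine ⟨by rcases hk with rfl | rfl <;> norm_num, fun k' _ => ?_⟩
    rw [constantProbeLoss_eq_one_fifth_iff.mpr hk]
    exact one_fifth_le_constantProbeLoss k'
end

section
/- Let Q be a finite set of questions and let h₁, h₂ : Q → {0,1} be two distinct binary features (h₁(q₀) ≠ h₂(q₀) for some q₀ ∈ Q). Define the probes pᵢ⁺(q) = hᵢ(q), pᵢ⁻(q) = 1 − hᵢ(q) for i = 1, 2. Then both probes have total CCS loss equal to zero, yet their induced classifiers differ: f_{p₁}(q₀) ≠ f_{p₂}(q₀). Hence a classifier attaining optimal CCS loss is under-specified: distinct binary features give distinct optimal classifiers. -/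
/-! A binary feature `h` gives the probe `p⁺ = h`, `p⁻ = 1 - h`, which is exactly consistent
(`p⁺ = 1 - p⁻`) and fully confident (`min p⁺ p⁻ = 0`), so its CCS loss vanishes; its averaged
prediction is `h` itself, so the induced classifier reproduces `h`. Two features that differ
at `q₀` therefore give two zero-loss probes whose classifiers differ at `q₀`. -/

lemma ccs_term_eq_zero_of_binary {h : ℝ} (hb : h = 0 ∨ h = 1) :
    (h - (1 - (1 - h))) ^ 2 + (min h (1 - h)) ^ 2 = 0 := by
  rcases hb with rfl | rfl <;> norm_num

lemma ccs_loss_eq_zero_of_binary {Q : Type*} [Fintype Q] {h : Q → ℝ}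
    (hb : ∀ q, h q = 0 ∨ h q = 1) :
    ∑ q : Q, ((h q - (1 - (1 - h q))) ^ 2 + (min (h q) (1 - h q)) ^ 2) = 0 :=
  Finset.sum_eq_zero fun q _ => ccs_term_eq_zero_of_binary (hb q)

lemma classifier_eq_self_of_binary {h : ℝ} (hb : h = 0 ∨ h = 1) :
    (if (h + (1 - (1 - h))) / 2 > 1 / 2 then (1 : ℝ) else 0) = h := by
  rcases hb with rfl | rfl <;> norm_num

/-- Two distinct binary features give probes that both attain zero
CCS loss yet induce classifiers that differ, so optimal-CCS-loss classifiers are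
under-specified. -/
theorem optimal_ccs_classifier_underspecified {Q : Type*} [Fintype Q]
    (h₁ h₂ : Q → ℝ) (hb₁ : ∀ q, h₁ q = 0 ∨ h₁ q = 1) (hb₂ : ∀ q, h₂ q = 0 ∨ h₂ q = 1)
    (q₀ : Q) (hne : h₁ q₀ ≠ h₂ q₀) :
    (∑ q : Q, ((h₁ q - (1 - (1 - h₁ q))) ^ 2 + (min (h₁ q) (1 - h₁ q)) ^ 2) = 0) ∧
    (∑ q : Q, ((h₂ q - (1 - (1 - h₂ q))) ^ 2 + (min (h₂ q) (1 - h₂ q)) ^ 2) = 0) ∧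
    ((if (h₁ q₀ + (1 - (1 - h₁ q₀))) / 2 > 1 / 2 then (1:ℝ) else 0)
      ≠ (if (h₂ q₀ + (1 - (1 - h₂ q₀))) / 2 > 1 / 2 then (1:ℝ) else 0)) := by
  refine ⟨ccs_loss_eq_zero_of_binary hb₁, ccs_loss_eq_zero_of_binary hb₂, ?_⟩
  rwa [classifier_eq_self_of_binary (hb₁ q₀), classifier_eq_self_of_binary (hb₂ q₀)]
end
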